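/- arXiv:math/0701290 — 3 statements merged into one kernel-verified Lean document; each statement's English description precedes it below -/
import Mathlib

section
/- Suppose Φ_1 and Φ_2 are Fourier transforms of probability densities f_1, f_2 on ℝ satisfying |Φ_i(u)| ≥ A|u|^{-β'} for |u| large (i = 1, 2), for some constants A > 0 and β' > 0. If Φ_1(u) e^{-|u|^{s_1}} = Φ_2(u) e^{-|u|^{s_2}} for all u ∈ ℝ, where s_1, s_2 > 0, then s_1 = s_2 and Φ_1 = Φ_2. -/
/-!
If `s₁ < s₂`, taking norms in the equation gives
`A |u|^{-β'} ≤ ‖Φ₁ u‖ ≤ exp (|u|^{s₁} - |u|^{s₂})` for large `|u|`, which is impossible because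
the right-hand side decays faster than every power of `|u|`. By symmetry `s₁ = s₂`, and then
`Φ₁ = Φ₂` because the exponential factor never vanishes.
-/

open Filter Asymptotics Real Topology

lemma isLittleO_rpow_rpow_atTop {s t : ℝ} (hst : s < t) :
    (fun u : ℝ => u ^ s) =o[atTop] fun u => u ^ t := by
  refine isLittleO_of_tendsto' ?_ ?_
  · filter_upwards [eventually_gt_atTop 0] with u hu h
    exact absurd h (rpow_pos_of_pos hu t).ne'
  · refine (tendsto_rpow_neg_atTop (sub_pos.2 hst)).congr' ?_
    filter_upwards [eventually_gt_atTop 0] with u hu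
    rw [← rpow_sub hu, neg_sub]

lemma tendsto_mul_log_add_rpow_sub_rpow_atBot (β : ℝ) {s t : ℝ} (hst : s < t) (ht : 0 < t) :
    Tendsto (fun u => β * log u + u ^ s - u ^ t) atTop atBot := by
  have hsmall : (fun u => β * log u + u ^ s) =o[atTop] fun u => u ^ t :=
    ((isLittleO_log_rpow_atTop ht).const_mul_left β).add (isLittleO_rpow_rpow_atTop hst)
  have hequiv : (fun u => u ^ t - (β * log u + u ^ s)) ~[atTop] fun u => u ^ t :=
    IsEquivalent.refl.sub_isLittleO hsmall
  rw [← tendsto_neg_atTop_iff]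
  refine (hequiv.symm.tendsto_atTop (tendsto_rpow_atTop ht)).congr fun u => ?_
  ring

lemma tendsto_rpow_mul_exp_rpow_sub_rpow_atTop (β : ℝ) {s t : ℝ} (hst : s < t) (ht : 0 < t) :
    Tendsto (fun u => u ^ β * exp (u ^ s - u ^ t)) atTop (𝓝 0) := by
  refine (tendsto_exp_atBot.comp (tendsto_mul_log_add_rpow_sub_rpow_atBot β hst ht)).congr' ?_
  filter_upwards [eventually_gt_atTop 0] with u hu
  rw [Function.comp_apply, add_sub_assoc, exp_add, mul_comm β, ← rpow_def_of_pos hu]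

lemma le_of_rpow_neg_le_exp_rpow_sub_rpow {A β s t : ℝ} (hA : 0 < A) (ht : 0 < t)
    (h : ∀ᶠ u in atTop, A * u ^ (-β) ≤ exp (u ^ s - u ^ t)) : t ≤ s := by
  by_contra! hst
  have hA' : ∀ᶠ u in atTop, A ≤ u ^ β * exp (u ^ s - u ^ t) := by
    filter_upwards [h, eventually_gt_atTop 0] with u hu hu0
    rwa [rpow_neg hu0.le, ← div_eq_mul_inv, div_le_iff₀' (rpow_pos_of_pos hu0 β)] at hu
  exact hA.not_ge (ge_of_tendsto (tendsto_rpow_mul_exp_rpow_sub_rpow_atTop β hst ht) hA')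

lemma norm_le_exp_sub_of_mul_exp_neg_eq {z w : ℂ} {a b : ℝ} (hw : ‖w‖ ≤ 1)
    (h : z * Complex.exp ((-a : ℝ) : ℂ) = w * Complex.exp ((-b : ℝ) : ℂ)) :
    ‖z‖ ≤ exp (a - b) := by
  have hn := congrArg norm h
  simp only [norm_mul, Complex.norm_exp_ofReal] at hn
  calc ‖z‖ = ‖z‖ * exp (-a) * exp a := by
        rw [mul_assoc, ← exp_add, neg_add_cancel, exp_zero, mul_one]
    _ = ‖w‖ * exp (-b) * exp a := by rw [hn]
    _ ≤ exp (-b) * exp a := by gcongr; exact mul_le_of_le_one_left (exp_pos _).le hw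
    _ = exp (a - b) := by rw [← exp_add, neg_add_eq_sub]

lemma le_of_mul_exp_neg_rpow_eq {Φ₁ Φ₂ : ℝ → ℂ} {A β s₁ s₂ : ℝ} (hA : 0 < A) (hs₂ : 0 < s₂)
    (hbd₂ : ∀ u, ‖Φ₂ u‖ ≤ 1) (hlow₁ : ∃ C, ∀ u : ℝ, C ≤ |u| → A * |u| ^ (-β) ≤ ‖Φ₁ u‖)
    (heq : ∀ u : ℝ, Φ₁ u * Complex.exp ((-(|u| ^ s₁) : ℝ) : ℂ)
        = Φ₂ u * Complex.exp ((-(|u| ^ s₂) : ℝ) : ℂ)) :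
    s₂ ≤ s₁ := by
  obtain ⟨C, hC⟩ := hlow₁
  refine le_of_rpow_neg_le_exp_rpow_sub_rpow (β := β) hA hs₂ ?_
  filter_upwards [eventually_ge_atTop C, eventually_ge_atTop 0] with u huC hu
  rw [← abs_of_nonneg hu]
  exact (hC u (huC.trans (le_abs_self u))).trans (norm_le_exp_sub_of_mul_exp_neg_eq (hbd₂ u) (heq u))

theorem stmt_2_general (Φ₁ Φ₂ : ℝ → ℂ) (A β' s₁ s₂ : ℝ)
    (hA : 0 < A) (hs₁ : 0 < s₁) (hs₂ : 0 < s₂)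
    (hbd₁ : ∀ u : ℝ, ‖Φ₁ u‖ ≤ 1) (hbd₂ : ∀ u : ℝ, ‖Φ₂ u‖ ≤ 1)
    (hlow₁ : ∃ C > (0:ℝ), ∀ u : ℝ, C ≤ |u| → A * |u| ^ (-β') ≤ ‖Φ₁ u‖)
    (hlow₂ : ∃ C > (0:ℝ), ∀ u : ℝ, C ≤ |u| → A * |u| ^ (-β') ≤ ‖Φ₂ u‖)
    (heq : ∀ u : ℝ, Φ₁ u * Complex.exp ((-(|u| ^ s₁) : ℝ) : ℂ)
        = Φ₂ u * Complex.exp ((-(|u| ^ s₂) : ℝ) : ℂ)) :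
    s₁ = s₂ ∧ Φ₁ = Φ₂ := by
  obtain ⟨C₁, -, hC₁⟩ := hlow₁
  obtain ⟨C₂, -, hC₂⟩ := hlow₂
  obtain rfl : s₁ = s₂ :=
    le_antisymm (le_of_mul_exp_neg_rpow_eq hA hs₁ hbd₁ ⟨C₂, hC₂⟩ fun u => (heq u).symm)
      (le_of_mul_exp_neg_rpow_eq hA hs₂ hbd₂ ⟨C₁, hC₁⟩ heq)
  exact ⟨rfl, funext fun u => mul_right_cancel₀ (Complex.exp_ne_zero _) (heq u)⟩

/-- Identifiability in the convolution model with stable noise: if two Fourier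
transforms of densities (bounded by 1, with polynomial lower bounds at infinity)
satisfy `Φ₁(u) e^{-|u|^{s₁}} = Φ₂(u) e^{-|u|^{s₂}}`, then `s₁ = s₂` and `Φ₁ = Φ₂`. -/
theorem stmt_2 (Φ₁ Φ₂ : ℝ → ℂ) (A β' s₁ s₂ : ℝ)
    (hA : 0 < A) (hβ' : 0 < β') (hs₁ : 0 < s₁) (hs₂ : 0 < s₂)
    (hbd₁ : ∀ u : ℝ, ‖Φ₁ u‖ ≤ 1) (hbd₂ : ∀ u : ℝ, ‖Φ₂ u‖ ≤ 1)
    (hlow₁ : ∃ C > (0:ℝ), ∀ u : ℝ, C ≤ |u| → A * |u| ^ (-β') ≤ ‖Φ₁ u‖)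
    (hlow₂ : ∃ C > (0:ℝ), ∀ u : ℝ, C ≤ |u| → A * |u| ^ (-β') ≤ ‖Φ₂ u‖)
    (heq : ∀ u : ℝ, Φ₁ u * Complex.exp ((-(|u| ^ s₁) : ℝ) : ℂ)
        = Φ₂ u * Complex.exp ((-(|u| ^ s₂) : ℝ) : ℂ)) :
    s₁ = s₂ ∧ Φ₁ = Φ₂ :=
  stmt_2_general Φ₁ Φ₂ A β' s₁ s₂ hA hs₁ hs₂ hbd₁ hbd₂ hlow₁ hlow₂ heq
end

section
/- Let f and f_0 be probability densities with Fourier transforms Φ, Φ_0, with f in the Sobolev class F(0,0,β,L) and f_0 in F(0,0,β̄,L), where 0 < β ≤ β̄. Let J_h be the sinc kernel with Fourier transform 1_{|u|≤1/h}. Then the bias B = ‖J_h * f‖_2² − ‖f‖_2² + 2⟨f − J_h*f, f_0⟩ satisfies |B| ≤ L(h^{2β} + 2h^{β+β̄}) ≤ 3L h^{2β} for 0 < h ≤ 1. -/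
open MeasureTheory

/-- Bias bound: with `f ∈ F(0,0,β,L)`, `f₀ ∈ F(0,0,β̄,L)`, `β ≤ β̄`, the bias
`B = ‖J_h*f‖² − ‖f‖² + 2⟨f − J_h*f, f₀⟩` (expressed on the Fourier side via
Parseval) satisfies `|B| ≤ L(h^{2β} + 2h^{β+β̄}) ≤ 3L h^{2β}` for `0 < h ≤ 1`. -/
theorem stmt_7 (Φ Φ₀ : ℝ → ℂ) (β β' L h : ℝ)
    (hβ : 0 < β) (hββ : β ≤ β') (hL : 0 < L) (hh0 : 0 < h) (hh1 : h ≤ 1)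
    (hint : Integrable (fun u : ℝ => ‖Φ u‖ ^ 2 * |u| ^ (2 * β)))
    (hint0 : Integrable (fun u : ℝ => ‖Φ₀ u‖ ^ 2 * |u| ^ (2 * β')))
    (hintΦ : Integrable (fun u : ℝ => ‖Φ u‖ ^ 2))
    (hintΦ0 : Integrable (fun u : ℝ => ‖Φ₀ u‖ ^ 2))
    (hSob : (1 / (2 * Real.pi)) * ∫ u : ℝ, ‖Φ u‖ ^ 2 * |u| ^ (2 * β) ≤ L)
    (hSob0 : (1 / (2 * Real.pi)) * ∫ u : ℝ, ‖Φ₀ u‖ ^ 2 * |u| ^ (2 * β') ≤ L)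
    (B : ℝ)
    (hB : B = (1 / (2 * Real.pi)) *
      (2 * (∫ u in {u : ℝ | 1 / h < |u|}, (Φ u * (starRingEnd ℂ) (Φ₀ u)).re)
        - ∫ u in {u : ℝ | 1 / h < |u|}, ‖Φ u‖ ^ 2)) :
    |B| ≤ L * (h ^ (2 * β) + 2 * h ^ (β + β')) ∧
      L * (h ^ (2 * β) + 2 * h ^ (β + β')) ≤ 3 * L * h ^ (2 * β) := by
  have hπ : (0:ℝ) < 2 * Real.pi := by positivity
  set S : Set ℝ := {u : ℝ | 1 / h < |u|} with hSdef
  have hSm : MeasurableSet S := measurableSet_lt measurable_const measurable_id.abs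
  -- full integral bounds
  have hI : ∫ u : ℝ, ‖Φ u‖ ^ 2 * |u| ^ (2 * β) ≤ 2 * Real.pi * L := by
    have := mul_le_mul_of_nonneg_left hSob hπ.le
    calc ∫ u : ℝ, ‖Φ u‖ ^ 2 * |u| ^ (2 * β)
        = 2 * Real.pi * (1 / (2 * Real.pi) * ∫ u : ℝ, ‖Φ u‖ ^ 2 * |u| ^ (2 * β)) := by
          field_simp
      _ ≤ 2 * Real.pi * L := this
  have hI0 : ∫ u : ℝ, ‖Φ₀ u‖ ^ 2 * |u| ^ (2 * β') ≤ 2 * Real.pi * L := by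
    have := mul_le_mul_of_nonneg_left hSob0 hπ.le
    calc ∫ u : ℝ, ‖Φ₀ u‖ ^ 2 * |u| ^ (2 * β')
        = 2 * Real.pi * (1 / (2 * Real.pi) * ∫ u : ℝ, ‖Φ₀ u‖ ^ 2 * |u| ^ (2 * β')) := by
          field_simp
      _ ≤ 2 * Real.pi * L := this
  -- basic facts on S
  have hmemS : ∀ u ∈ S, 1 < h * |u| := by
    intro u hu
    have : 1 / h < |u| := hu
    rw [div_lt_iff₀ hh0] at this
    linarith [this]
  -- Tail bound for ‖Φ‖²
  have hT1 : ∫ u in S, ‖Φ u‖ ^ 2 ≤ h ^ (2 * β) * (2 * Real.pi * L) := by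
    have step1 : ∫ u in S, ‖Φ u‖ ^ 2
        ≤ ∫ u in S, h ^ (2 * β) * (‖Φ u‖ ^ 2 * |u| ^ (2 * β)) := by
      apply integral_mono_of_nonneg
      · filter_upwards with u; positivity
      · exact hint.restrict.const_mul _
      · filter_upwards [ae_restrict_mem hSm] with u hu
        have hx : 1 < h * |u| := hmemS u hu
        have hx0 : (0:ℝ) < |u| := by nlinarith
        have h1 : (1:ℝ) ≤ (h * |u|) ^ (2 * β) :=
          Real.one_le_rpow hx.le (by linarith)
        have h2 : (h * |u|) ^ (2 * β) = h ^ (2 * β) * |u| ^ (2 * β) :=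
          Real.mul_rpow hh0.le hx0.le
        have := mul_le_mul_of_nonneg_left h1 (by positivity : (0:ℝ) ≤ ‖Φ u‖ ^ 2)
        rw [h2] at this
        simpa [mul_assoc, mul_comm, mul_left_comm] using this
    have step2 : ∫ u in S, h ^ (2 * β) * (‖Φ u‖ ^ 2 * |u| ^ (2 * β))
        = h ^ (2 * β) * ∫ u in S, ‖Φ u‖ ^ 2 * |u| ^ (2 * β) := by
      exact integral_const_mul _ _
    have step3 : ∫ u in S, ‖Φ u‖ ^ 2 * |u| ^ (2 * β)
        ≤ ∫ u : ℝ, ‖Φ u‖ ^ 2 * |u| ^ (2 * β) := by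
      apply setIntegral_le_integral hint
      filter_upwards with u; positivity
    have hhp : (0:ℝ) ≤ h ^ (2 * β) := by positivity
    calc ∫ u in S, ‖Φ u‖ ^ 2 ≤ h ^ (2 * β) * ∫ u in S, ‖Φ u‖ ^ 2 * |u| ^ (2 * β) := by
          rw [← step2]; exact step1
      _ ≤ h ^ (2 * β) * (2 * Real.pi * L) :=
          mul_le_mul_of_nonneg_left (step3.trans hI) hhp
  -- Tail bound for the cross term
  have hT2 : |∫ u in S, (Φ u * (starRingEnd ℂ) (Φ₀ u)).re|
      ≤ h ^ (β + β') * (2 * Real.pi * L) := by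
    have pw : ∀ u ∈ S, |(Φ u * (starRingEnd ℂ) (Φ₀ u)).re|
        ≤ h ^ (β + β') * ((1/2) * (‖Φ u‖ ^ 2 * |u| ^ (2 * β) + ‖Φ₀ u‖ ^ 2 * |u| ^ (2 * β'))) := by
      intro u hu
      have hx : 1 < h * |u| := hmemS u hu
      have hx0 : (0:ℝ) < |u| := by nlinarith
      set a := ‖Φ u‖ with ha
      set b := ‖Φ₀ u‖ with hb
      have ha0 : 0 ≤ a := norm_nonneg _
      have hb0 : 0 ≤ b := norm_nonneg _
      have e1 : |(Φ u * (starRingEnd ℂ) (Φ₀ u)).re| ≤ a * b := by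
        calc |(Φ u * (starRingEnd ℂ) (Φ₀ u)).re| ≤ ‖Φ u * (starRingEnd ℂ) (Φ₀ u)‖ :=
              Complex.abs_re_le_norm _
          _ = a * b := by rw [norm_mul, RCLike.norm_conj]
      have h1 : (1:ℝ) ≤ (h * |u|) ^ (β + β') :=
        Real.one_le_rpow hx.le (by linarith)
      have h2 : (h * |u|) ^ (β + β') = h ^ (β + β') * (|u| ^ β * |u| ^ β') := by
        rw [Real.mul_rpow hh0.le hx0.le, Real.rpow_add hx0]
      have e2 : a * b ≤ h ^ (β + β') * ((a * |u| ^ β) * (b * |u| ^ β')) := by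
        have := mul_le_mul_of_nonneg_left h1 (mul_nonneg ha0 hb0)
        rw [h2] at this
        calc a * b = a * b * 1 := by ring
          _ ≤ a * b * (h ^ (β + β') * (|u| ^ β * |u| ^ β')) := this
          _ = h ^ (β + β') * ((a * |u| ^ β) * (b * |u| ^ β')) := by ring
      have sqβ : (|u| ^ β) ^ 2 = |u| ^ (2 * β) := by
        rw [two_mul, Real.rpow_add hx0, sq]
      have sqβ' : (|u| ^ β') ^ 2 = |u| ^ (2 * β') := by
        rw [two_mul, Real.rpow_add hx0, sq]
      have amgm : (a * |u| ^ β) * (b * |u| ^ β')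
          ≤ (1/2) * (a ^ 2 * |u| ^ (2 * β) + b ^ 2 * |u| ^ (2 * β')) := by
        have := two_mul_le_add_sq (a * |u| ^ β) (b * |u| ^ β')
        have hsq : (a * |u| ^ β) ^ 2 + (b * |u| ^ β') ^ 2
            = a ^ 2 * |u| ^ (2 * β) + b ^ 2 * |u| ^ (2 * β') := by
          rw [mul_pow, mul_pow, sqβ, sqβ']
        nlinarith [this, hsq]
      have hhp : (0:ℝ) ≤ h ^ (β + β') := by positivity
      calc |(Φ u * (starRingEnd ℂ) (Φ₀ u)).re| ≤ a * b := e1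
        _ ≤ h ^ (β + β') * ((a * |u| ^ β) * (b * |u| ^ β')) := e2
        _ ≤ h ^ (β + β') * ((1/2) * (a ^ 2 * |u| ^ (2 * β) + b ^ 2 * |u| ^ (2 * β'))) :=
            mul_le_mul_of_nonneg_left amgm hhp
    have step1 : |∫ u in S, (Φ u * (starRingEnd ℂ) (Φ₀ u)).re|
        ≤ ∫ u in S, |(Φ u * (starRingEnd ℂ) (Φ₀ u)).re| := by
      simpa [Real.norm_eq_abs] using
        norm_integral_le_integral_norm (μ := volume.restrict S)
          (fun u => (Φ u * (starRingEnd ℂ) (Φ₀ u)).re)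
    have step2 : ∫ u in S, |(Φ u * (starRingEnd ℂ) (Φ₀ u)).re|
        ≤ ∫ u in S, h ^ (β + β') * ((1/2) * (‖Φ u‖ ^ 2 * |u| ^ (2 * β) + ‖Φ₀ u‖ ^ 2 * |u| ^ (2 * β'))) := by
      apply integral_mono_of_nonneg
      · filter_upwards with u; positivity
      · exact ((hint.restrict.add hint0.restrict).const_mul _).const_mul _
      · filter_upwards [ae_restrict_mem hSm] with u hu
        exact pw u hu
    have step3 : ∫ u in S, h ^ (β + β') * ((1/2) * (‖Φ u‖ ^ 2 * |u| ^ (2 * β) + ‖Φ₀ u‖ ^ 2 * |u| ^ (2 * β')))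
        ≤ h ^ (β + β') * (2 * Real.pi * L) := by
      rw [integral_const_mul]
      apply mul_le_mul_of_nonneg_left _ (by positivity : (0:ℝ) ≤ h ^ (β + β'))
      rw [integral_const_mul]
      have hsum : ∫ u in S, (‖Φ u‖ ^ 2 * |u| ^ (2 * β) + ‖Φ₀ u‖ ^ 2 * |u| ^ (2 * β'))
          ≤ 2 * (2 * Real.pi * L) := by
        rw [integral_add hint.restrict hint0.restrict]
        have b1 : ∫ u in S, ‖Φ u‖ ^ 2 * |u| ^ (2 * β) ≤ 2 * Real.pi * L := by
          refine (setIntegral_le_integral hint ?_).trans hI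
          filter_upwards with u; positivity
        have b2 : ∫ u in S, ‖Φ₀ u‖ ^ 2 * |u| ^ (2 * β') ≤ 2 * Real.pi * L := by
          refine (setIntegral_le_integral hint0 ?_).trans hI0
          filter_upwards with u; positivity
        linarith
      linarith
    exact step1.trans (step2.trans step3)
  -- combine
  have hT1nn : 0 ≤ ∫ u in S, ‖Φ u‖ ^ 2 := by
    apply integral_nonneg; intro u; positivity
  constructor
  · set T2 := ∫ u in S, (Φ u * (starRingEnd ℂ) (Φ₀ u)).re with hT2def
    set T1 := ∫ u in S, ‖Φ u‖ ^ 2 with hT1def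
    have habs : |2 * T2 - T1| ≤ 2 * |T2| + T1 := by
      have := abs_sub (2 * T2) T1
      have h2 : |2 * T2| = 2 * |T2| := by rw [abs_mul]; norm_num
      have h3 : |T1| = T1 := abs_of_nonneg hT1nn
      calc |2 * T2 - T1| ≤ |2 * T2| + |T1| := abs_sub _ _
        _ = 2 * |T2| + T1 := by rw [h2, h3]
    have hBabs : |B| = 1 / (2 * Real.pi) * |2 * T2 - T1| := by
      rw [hB, abs_mul, abs_of_nonneg (by positivity : (0:ℝ) ≤ 1 / (2 * Real.pi))]
    have key : |2 * T2 - T1| ≤ 2 * (h ^ (β + β') * (2 * Real.pi * L)) + h ^ (2 * β) * (2 * Real.pi * L) := by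
      have := hT2
      have := hT1
      linarith [habs]
    have hc1 : 1 / (2 * Real.pi) * (2 * Real.pi) = 1 := by field_simp
    calc |B| = 1 / (2 * Real.pi) * |2 * T2 - T1| := hBabs
      _ ≤ 1 / (2 * Real.pi) * (2 * (h ^ (β + β') * (2 * Real.pi * L)) + h ^ (2 * β) * (2 * Real.pi * L)) :=
          mul_le_mul_of_nonneg_left key (by positivity)
      _ = L * (h ^ (2 * β) + 2 * h ^ (β + β')) := by
          field_simp
          ring
  · have hle : h ^ (β + β') ≤ h ^ (2 * β) :=
      Real.rpow_le_rpow_of_exponent_ge hh0 hh1 (by linarith)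
    nlinarith [hle, hL.le]
end

section
/- Let G : ℝ → ℝ be continuously differentiable, supported in [−1, 0], with ∫ G = 0. Let p_0 : ℝ → ℝ be continuously differentiable with inf_{[−1,2]} p_0 > 0. For bandwidths 0 < h_ν ≤ h_β ≤ 1 and points x_β, x_ν ∈ [0,1], define G_β(y) = h_β^{-1}G(y/h_β) and G_ν(y) = h_ν^{-1}G(y/h_ν). Then |∫ G_β(y − x_β) G_ν(y − x_ν) / p_0(y) dy| ≤ (h_ν / h_β²) · [ (inf p_0)^{-1} ‖G‖_∞ ‖G'‖_∞ + ‖G‖_∞ ‖p_0'‖_∞ (inf p_0)^{-2} (h_β ‖G‖_∞ + h_ν ‖G'‖_∞) ]. -/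
/-!
Write `ν = G_ν(· - x_ν)` and `H = G_β(· - x_β) / p₀`. Since `∫ ν = 0`, the integral equals
`∫ ν (H - H(x_ν))`. On the support `[x_ν - h_ν, x_ν] ⊆ [-1, 2]` of `ν` the mean value theorem
and the quotient rule give `|H - H(x_ν)| ≤ h_ν (‖G'‖_∞ / (h_β² m) + ‖G‖_∞ ‖p₀'‖_∞ / (h_β m²))`, and
`∫ |ν| = ∫ |G| ≤ ‖G‖_∞`.
-/

open MeasureTheory Set

theorem integral_abs_le_of_support_subset_Icc {f : ℝ → ℝ} {a b C : ℝ} (hab : a ≤ b)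
    (hf : Function.support f ⊆ Icc a b) (hC : ∀ x, |f x| ≤ C) :
    ∫ x, |f x| ≤ C * (b - a) := by
  have hle : ∀ x, |f x| ≤ (Icc a b).indicator (fun _ => C) x := by
    intro x
    by_cases hx : x ∈ Icc a b
    · simpa [hx] using hC x
    · simp [hx, Function.notMem_support.mp (fun h => hx (hf h))]
  calc ∫ x, |f x| ≤ ∫ x, (Icc a b).indicator (fun _ => C) x :=
        integral_mono_of_nonneg (ae_of_all _ fun x => abs_nonneg _)
          ((integrableOn_const measure_Icc_lt_top.ne).integrable_indicator measurableSet_Icc)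
          (ae_of_all _ hle)
    _ = C * (b - a) := by
        rw [integral_indicator_const _ measurableSet_Icc, Real.volume_real_Icc_of_le hab,
          smul_eq_mul, mul_comm]

noncomputable def scaledKernel (f : ℝ → ℝ) (h x y : ℝ) : ℝ := h⁻¹ * f ((y - x) / h)

section ScaledKernel

variable {f : ℝ → ℝ} {h : ℝ}

theorem integral_scaledKernel (hh : 0 < h) (x : ℝ) :
    ∫ y, scaledKernel f h x y = ∫ y, f y := by
  simp only [scaledKernel]
  rw [integral_const_mul, integral_sub_right_eq_self (fun z => f (z / h)) x,
    Measure.integral_comp_div, abs_of_pos hh, smul_eq_mul, inv_mul_cancel_left₀ hh.ne']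

theorem abs_scaledKernel (hh : 0 < h) (x y : ℝ) :
    |scaledKernel f h x y| = scaledKernel (fun z => |f z|) h x y := by
  simp only [scaledKernel, abs_mul, abs_inv, abs_of_pos hh]

theorem abs_scaledKernel_le {C : ℝ} (hh : 0 < h) (hC : ∀ z, |f z| ≤ C) (x y : ℝ) :
    |scaledKernel f h x y| ≤ C / h := by
  rw [abs_scaledKernel hh, scaledKernel, inv_mul_eq_div]
  exact div_le_div_of_nonneg_right (hC _) hh.le

theorem MeasureTheory.Integrable.scaledKernel (hf : Integrable f) (hh : h ≠ 0) (x : ℝ) :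
    Integrable (scaledKernel f h x) :=
  ((hf.comp_div hh).comp_sub_right x).const_mul _

theorem support_scaledKernel_subset {a b : ℝ} (hh : 0 < h) (hf : Function.support f ⊆ Icc a b)
    (x : ℝ) : Function.support (scaledKernel f h x) ⊆ Icc (x + a * h) (x + b * h) := by
  intro y hy
  have hy' : (y - x) / h ∈ Icc a b :=
    hf (Function.mem_support.mpr fun h0 => hy (by simp [scaledKernel, h0]))
  rw [mem_Icc, le_div_iff₀ hh, div_le_iff₀ hh] at hy'
  constructor <;> linarith [hy'.1, hy'.2]

theorem hasDerivAt_scaledKernel {x y : ℝ} (hf : DifferentiableAt ℝ f ((y - x) / h)) :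
    HasDerivAt (scaledKernel f h x) (scaledKernel (deriv f) h x y / h) y := by
  have hin : HasDerivAt (fun y => (y - x) / h) h⁻¹ y := by
    simpa using ((hasDerivAt_id y).sub_const x).div_const h
  exact ((hf.hasDerivAt.comp y hin).const_mul h⁻¹).congr_deriv (by simp only [scaledKernel]; ring)

theorem abs_deriv_scaledKernel_le {C : ℝ} (hf : Differentiable ℝ f) (hh : 0 < h)
    (hC : ∀ z, |deriv f z| ≤ C) (x y : ℝ) : |deriv (scaledKernel f h x) y| ≤ C / h ^ 2 := by
  rw [(hasDerivAt_scaledKernel (hf _)).deriv, abs_div, abs_of_pos hh, pow_two, ← div_div]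
  exact div_le_div_of_nonneg_right (abs_scaledKernel_le hh hC x y) hh.le

theorem Continuous.scaledKernel (hf : Continuous f) (h x : ℝ) :
    Continuous (scaledKernel f h x) := by
  unfold _root_.scaledKernel
  fun_prop

theorem integral_abs_scaledKernel_le {a b C : ℝ} (hh : 0 < h) (hab : a ≤ b)
    (hf : Function.support f ⊆ Icc a b) (hC : ∀ z, |f z| ≤ C) (x : ℝ) :
    ∫ y, |scaledKernel f h x y| ≤ C * (b - a) := by
  simp_rw [abs_scaledKernel hh, integral_scaledKernel hh]
  exact integral_abs_le_of_support_subset_Icc hab hf hC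

end ScaledKernel

theorem abs_quotient_rule_le {a b c d A B C m : ℝ} (hm : 0 < m) (hd : m ≤ d) (ha : |a| ≤ A)
    (hb : |b| ≤ B) (hc : |c| ≤ C) : |(a * d - b * c) / d ^ 2| ≤ A / m + B * C / m ^ 2 := by
  have hd0 : 0 < d := hm.trans_le hd
  have hB : 0 ≤ B := (abs_nonneg b).trans hb
  have hsplit : (a * d - b * c) / d ^ 2 = a / d - b * c / d ^ 2 := by field_simp
  calc |(a * d - b * c) / d ^ 2| ≤ |a / d| + |b * c / d ^ 2| := hsplit ▸ abs_sub _ _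
    _ = |a| / d + |b| * |c| / d ^ 2 := by
        rw [abs_div, abs_div, abs_mul, abs_of_pos hd0, abs_of_pos (pow_pos hd0 2)]
    _ ≤ A / m + B * C / m ^ 2 := by
        gcongr
        · exact (abs_nonneg a).trans ha
        · exact mul_nonneg hB ((abs_nonneg c).trans hc)

theorem Convex.abs_div_sub_div_le {f g : ℝ → ℝ} {s : Set ℝ} {A B C m x y : ℝ} (hs : Convex ℝ s)
    (hf : ∀ z ∈ s, DifferentiableAt ℝ f z) (hg : ∀ z ∈ s, DifferentiableAt ℝ g z) (hm : 0 < m)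
    (hgm : ∀ z ∈ s, m ≤ g z) (hf' : ∀ z ∈ s, |deriv f z| ≤ A) (hfB : ∀ z ∈ s, |f z| ≤ B)
    (hg' : ∀ z ∈ s, |deriv g z| ≤ C) (hx : x ∈ s) (hy : y ∈ s) :
    |f y / g y - f x / g x| ≤ (A / m + B * C / m ^ 2) * |y - x| :=
  hs.norm_image_sub_le_of_norm_hasDerivWithin_le
    (fun z hz => ((hf z hz).hasDerivAt.div (hg z hz).hasDerivAt
      (hm.trans_le (hgm z hz)).ne').hasDerivWithinAt)
    (fun z hz => abs_quotient_rule_le hm (hgm z hz) (hf' z hz) (hfB z hz) (hg' z hz)) hx hy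

theorem abs_integral_mul_le_of_integral_eq_zero {α : Type*} [MeasurableSpace α] {μ : Measure α}
    {ν H : α → ℝ} {c ε : ℝ} (hν : Integrable ν μ) (hν0 : ∫ a, ν a ∂μ = 0)
    (hH : AEStronglyMeasurable H μ) (hclose : ∀ a, ν a ≠ 0 → |H a - c| ≤ ε) :
    |∫ a, ν a * H a ∂μ| ≤ ε * ∫ a, |ν a| ∂μ := by
  have hpt : ∀ a, ‖ν a * (H a - c)‖ ≤ ε * |ν a| := by
    intro a
    by_cases ha : ν a = 0
    · simp [ha]
    · rw [Real.norm_eq_abs, abs_mul, mul_comm]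
      exact mul_le_mul_of_nonneg_right (hclose a ha) (abs_nonneg _)
  have hdom : Integrable (fun a => ε * |ν a|) μ := hν.abs.const_mul ε
  have hint : Integrable (fun a => ν a * (H a - c)) μ :=
    hdom.mono' (hν.aestronglyMeasurable.mul (hH.sub aestronglyMeasurable_const)) (ae_of_all _ hpt)
  have hshift : ∫ a, ν a * H a ∂μ = ∫ a, ν a * (H a - c) ∂μ := by
    calc ∫ a, ν a * H a ∂μ = ∫ a, (ν a * (H a - c) + c * ν a) ∂μ := by
          congr 1; ext a; ring
      _ = ∫ a, ν a * (H a - c) ∂μ := by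
          rw [integral_add hint (hν.const_mul c), integral_const_mul, hν0, mul_zero, add_zero]
  rw [hshift, ← integral_const_mul]
  exact norm_integral_le_of_norm_le hdom (ae_of_all _ hpt)

theorem abs_scaledKernel_div_sub_le {G p : ℝ → ℝ} {s : Set ℝ} {h x m CG CG' Cp y z : ℝ}
    (hs : Convex ℝ s) (hG : Differentiable ℝ G) (hp : ∀ w ∈ s, DifferentiableAt ℝ p w)
    (hh : 0 < h) (hm : 0 < m) (hpm : ∀ w ∈ s, m ≤ p w) (hCG : ∀ w, |G w| ≤ CG)
    (hCG' : ∀ w, |deriv G w| ≤ CG') (hCp : ∀ w ∈ s, |deriv p w| ≤ Cp) (hy : y ∈ s) (hz : z ∈ s) :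
    |scaledKernel G h x y / p y - scaledKernel G h x z / p z| ≤
      (CG' / h ^ 2 / m + CG / h * Cp / m ^ 2) * |y - z| :=
  hs.abs_div_sub_div_le (fun _ _ => (hasDerivAt_scaledKernel (hG _)).differentiableAt) hp hm
    hpm (fun w _ => abs_deriv_scaledKernel_le hG hh hCG' x w)
    (fun w _ => abs_scaledKernel_le hh hCG x w) hCp hz hy

theorem stmt_10_general (G p₀ : ℝ → ℝ) (hG : ContDiff ℝ 1 G)
    (hsupp : Function.support G ⊆ Set.Icc (-1) 0)
    (hGint : ∫ x : ℝ, G x = 0)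
    (hp : ContDiff ℝ 1 p₀)
    (m CG CG' Cp' : ℝ) (hm : 0 < m)
    (hmle : ∀ x ∈ Set.Icc (-1 : ℝ) 2, m ≤ p₀ x)
    (hCG : ∀ x, |G x| ≤ CG) (hCG' : ∀ x, |deriv G x| ≤ CG')
    (hCp' : ∀ x, |deriv p₀ x| ≤ Cp')
    (hβ hν : ℝ) (h1 : 0 < hν) (h2 : hν ≤ hβ) (h3 : hβ ≤ 1)
    (xβ xν : ℝ) (hxν : xν ∈ Set.Icc (0:ℝ) 1) :
    |∫ y : ℝ, (hβ⁻¹ * G ((y - xβ) / hβ)) * (hν⁻¹ * G ((y - xν) / hν)) / p₀ y| ≤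
      hν / hβ ^ 2 *
        (m⁻¹ * CG * CG' + CG * Cp' * (m ^ 2)⁻¹ * (hβ * CG + hν * CG')) := by
  have hβ0 : 0 < hβ := h1.trans_le h2
  set ν := scaledKernel G hν xν
  set H : ℝ → ℝ := fun y => scaledKernel G hβ xβ y / p₀ y
  have hCG0 : 0 ≤ CG := (abs_nonneg _).trans (hCG 0)
  have hCG'0 : 0 ≤ CG' := (abs_nonneg _).trans (hCG' 0)
  have hCp'0 : 0 ≤ Cp' := (abs_nonneg _).trans (hCp' 0)
  set L := CG' / hβ ^ 2 / m + CG / hβ * Cp' / m ^ 2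
  have hGi : Integrable G := hG.continuous.integrable_of_hasCompactSupport
    (HasCompactSupport.intro isCompact_Icc fun y hy => Function.notMem_support.mp (hy <| hsupp ·))
  have hνsupp : ∀ y, ν y ≠ 0 → y ∈ Icc (xν - hν) xν := fun y hy => by
    simpa [sub_eq_add_neg] using support_scaledKernel_subset h1 hsupp xν hy
  have hclose : ∀ y, ν y ≠ 0 → |H y - H xν| ≤ L * hν := fun y hy => by
    have hys := hνsupp y hy
    have hsub : Icc (xν - hν) xν ⊆ Icc (-1) 2 :=
      Icc_subset_Icc (by linarith [hxν.1]) (by linarith [hxν.2])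
    refine (abs_scaledKernel_div_sub_le (convex_Icc _ _) (hG.differentiable one_ne_zero)
      (fun w _ => hp.differentiable one_ne_zero w) hβ0 hm hmle hCG hCG' (fun w _ => hCp' w)
      (hsub hys) (hsub ⟨by linarith [hys.1], le_rfl⟩)).trans ?_
    gcongr
    exact abs_le.mpr ⟨by linarith [hys.1], by linarith [hys.2]⟩
  have hνabs : ∫ y, |ν y| ≤ CG := by
    simpa using integral_abs_scaledKernel_le h1 (by norm_num) hsupp hCG xν
  have hH : AEStronglyMeasurable H :=
    ((hG.continuous.scaledKernel hβ xβ).measurable.div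
      hp.continuous.measurable).aestronglyMeasurable
  calc |∫ y : ℝ, (hβ⁻¹ * G ((y - xβ) / hβ)) * (hν⁻¹ * G ((y - xν) / hν)) / p₀ y|
      = |∫ y, ν y * H y| := by congr 2; ext y; simp only [ν, H, scaledKernel]; ring
    _ ≤ L * hν * ∫ y, |ν y| := abs_integral_mul_le_of_integral_eq_zero
        (hGi.scaledKernel h1.ne' xν) (by rw [integral_scaledKernel h1, hGint]) hH hclose
    _ ≤ L * hν * CG := by gcongr
    _ = hν / hβ ^ 2 * (m⁻¹ * CG * CG' + CG * Cp' * (m ^ 2)⁻¹ * (hβ * CG)) := by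
      simp only [L]
      field_simp
    _ ≤ hν / hβ ^ 2 *
        (m⁻¹ * CG * CG' + CG * Cp' * (m ^ 2)⁻¹ * (hβ * CG + hν * CG')) := by
      gcongr
      exact le_add_of_nonneg_right (by positivity)

/-- Bound on the cross term `∫ G_β(y−x_β) G_ν(y−x_ν)/p₀(y) dy` for a C¹ bump
function `G` supported in `[−1,0]` with `∫G = 0`. -/
theorem stmt_10 (G p₀ : ℝ → ℝ) (hG : ContDiff ℝ 1 G)
    (hsupp : Function.support G ⊆ Set.Icc (-1) 0)
    (hGint : ∫ x : ℝ, G x = 0)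
    (hp : ContDiff ℝ 1 p₀)
    (m CG CG' Cp' : ℝ) (hm : 0 < m)
    (hmle : ∀ x ∈ Set.Icc (-1 : ℝ) 2, m ≤ p₀ x)
    (hCG : ∀ x, |G x| ≤ CG) (hCG' : ∀ x, |deriv G x| ≤ CG')
    (hCp' : ∀ x, |deriv p₀ x| ≤ Cp')
    (hβ hν : ℝ) (h1 : 0 < hν) (h2 : hν ≤ hβ) (h3 : hβ ≤ 1)
    (xβ xν : ℝ) (hxβ : xβ ∈ Set.Icc (0:ℝ) 1) (hxν : xν ∈ Set.Icc (0:ℝ) 1) :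
    |∫ y : ℝ, (hβ⁻¹ * G ((y - xβ) / hβ)) * (hν⁻¹ * G ((y - xν) / hν)) / p₀ y| ≤
      hν / hβ ^ 2 *
        (m⁻¹ * CG * CG' + CG * Cp' * (m ^ 2)⁻¹ * (hβ * CG + hν * CG')) :=
  stmt_10_general G p₀ hG hsupp hGint hp m CG CG' Cp' hm hmle hCG hCG' hCp' hβ hν h1 h2 h3 xβ xν hxν
end
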